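/- If Q is a small involutive quantaloid that is locally localic and modular, then the quantaloid Matr(Q) of Q-typed sets and Q-valued matrices is modular (with the involution given by transposing a matrix and applying the involution of Q entrywise). -/

import Mathlib

/-!
Fix the entry `(x, z)`. Since `Q(tx, tz)` is a frame, the meet with `P x z` distributes over the
join `⨆ y, M x y ≫ N y z`; the modular law of `Q` bounds each term by
`(M x y ⊓ P x z ≫ (N y z)°) ≫ N y z`, and `P x z ≫ (N y z)°` is one of the terms of the join
`⨆ z', P x z' ≫ (N y z')°`. Composition is monotone because it preserves joins.
-/

open CategoryTheory

universe v u

theorem monotone_of_map_sSup {α β : Type*} [CompleteLattice α] [CompleteLattice β] {φ : α → β}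
    (h : ∀ S : Set α, φ (sSup S) = ⨆ a ∈ S, φ a) : Monotone φ := fun a b hab =>
  calc φ a ≤ ⨆ c ∈ ({a, b} : Set α), φ c := le_biSup φ (Set.mem_insert a _)
    _ = φ b := by rw [← h, sSup_pair, sup_of_le_right hab]

theorem iSup_inf_eq_of_inf_sSup {α ι : Type*} [CompleteLattice α]
    (h : ∀ (a : α) (S : Set α), a ⊓ sSup S = ⨆ b ∈ S, a ⊓ b) (f : ι → α) (a : α) :
    (⨆ i, f i) ⊓ a = ⨆ i, f i ⊓ a := by
  rw [inf_comm, ← sSup_range, h, iSup_range]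
  simp only [inf_comm]

/-- If a small involutive quantaloid `Q` is locally localic and modular, then the
quantaloid `Matr(Q)` of `Q`-typed sets and `Q`-valued matrices is modular
(stated entrywise, with the involution of a matrix given by transposing and applying
the involution of `Q` entrywise). -/
theorem stmt_9 {Q : Type u} [Category.{v} Q] [∀ X Y : Q, CompleteLattice (X ⟶ Y)]
    (sSup_comp : ∀ {X Y Z : Q} (S : Set (X ⟶ Y)) (g : Y ⟶ Z), sSup S ≫ g = ⨆ f ∈ S, f ≫ g)
    (comp_sSup : ∀ {X Y Z : Q} (f : X ⟶ Y) (S : Set (Y ⟶ Z)), f ≫ sSup S = ⨆ g ∈ S, f ≫ g)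
    (inv : ∀ {X Y : Q}, (X ⟶ Y) → (Y ⟶ X))
    (inv_inv : ∀ {X Y : Q} (f : X ⟶ Y), inv (inv f) = f)
    (inv_comp : ∀ {X Y Z : Q} (f : X ⟶ Y) (g : Y ⟶ Z), inv (f ≫ g) = inv g ≫ inv f)
    (inv_id : ∀ X : Q, inv (𝟙 X) = 𝟙 X)
    (inv_sSup : ∀ {X Y : Q} (S : Set (X ⟶ Y)), inv (sSup S) = ⨆ f ∈ S, inv f)
    (locallyLocalic : ∀ {X Y : Q} (f : X ⟶ Y) (S : Set (X ⟶ Y)),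
      f ⊓ sSup S = ⨆ g ∈ S, f ⊓ g)
    (modular : ∀ {X Y Z : Q} (f : X ⟶ Y) (g : Y ⟶ Z) (h : X ⟶ Z),
      (f ≫ g) ⊓ h ≤ (f ⊓ (h ≫ inv g)) ≫ g)
    -- the modular law in Matr(Q), stated entrywise:
    (X Y Z : Type v) (tX : X → Q) (tY : Y → Q) (tZ : Z → Q)
    (M : ∀ x y, tX x ⟶ tY y) (N : ∀ y z, tY y ⟶ tZ z) (P : ∀ x z, tX x ⟶ tZ z)
    (x : X) (z : Z) :
    (⨆ y, M x y ≫ N y z) ⊓ P x z ≤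
      ⨆ y, (M x y ⊓ ⨆ z', P x z' ≫ inv (N y z')) ≫ N y z := by
  rw [iSup_inf_eq_of_inf_sSup locallyLocalic]
  refine iSup_mono fun y => (modular _ _ _).trans ?_
  exact monotone_of_map_sSup (φ := (· ≫ N y z)) (sSup_comp · _)
    (inf_le_inf_left _ (le_iSup (fun z' => P x z' ≫ inv (N y z')) z))
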